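/- arXiv:2205.09520 — 3 statements merged into one kernel-verified Lean document; each statement's English description precedes it below -/
import Mathlib

section
/- For every nonempty set S of defective items with S ⊆ {0,1,…,2^k−1}, the number of positive tests produced by the SAFFRON test scheme equals k + |{r : 0 ≤ r < k and there exist i, j ∈ S with Nat.testBit i r ≠ Nat.testBit j r}| (i.e., k plus the number of bit positions on which the elements of S disagree). -/
/-- Test `j` (with `0 ≤ j < 2*k`) of the SAFFRON test scheme is positive for the
defective set `S`: for `r < k`, test `r` is positive iff some `i ∈ S` has
`Nat.testBit i r = true`, and test `k + r` is positive iff some `i ∈ S` has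
`Nat.testBit i r = false`. -/
def saffronPositive (k : ℕ) (S : Finset ℕ) (j : ℕ) : Prop :=
  if j < k then ∃ i ∈ S, Nat.testBit i j = true
  else ∃ i ∈ S, Nat.testBit i (j - k) = false

instance (k : ℕ) (S : Finset ℕ) (j : ℕ) : Decidable (saffronPositive k S j) := by
  unfold saffronPositive; infer_instance

/-- The number of positive tests among the `2*k` tests of the SAFFRON test scheme. -/
def saffronPosCount (k : ℕ) (S : Finset ℕ) : ℕ :=
  ((Finset.range (2 * k)).filter fun j => saffronPositive k S j).card

theorem saffron_posCount_eq_k_add_disagreements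
    (k : ℕ) (hk : 1 ≤ k) (S : Finset ℕ) (hS : S.Nonempty)
    (hsub : S ⊆ Finset.range (2 ^ k)) :
    saffronPosCount k S =
      k + ((Finset.range k).filter fun r =>
        ∃ i ∈ S, ∃ j ∈ S, Nat.testBit i r ≠ Nat.testBit j r).card := by
  classical
  have key : ∀ r ∈ Finset.range k,
      ((if saffronPositive k S r then 1 else 0) +
       (if saffronPositive k S (k + r) then 1 else 0) : ℕ) =
      1 + (if (∃ i ∈ S, ∃ j ∈ S, Nat.testBit i r ≠ Nat.testBit j r) then 1 else 0) := by
    intro r hr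
    rw [Finset.mem_range] at hr
    have hA : saffronPositive k S r ↔ ∃ i ∈ S, Nat.testBit i r = true := by
      simp [saffronPositive, hr]
    have hB : saffronPositive k S (k + r) ↔ ∃ i ∈ S, Nat.testBit i r = false := by
      simp [saffronPositive, Nat.not_lt.2 (Nat.le_add_right k r), Nat.add_sub_cancel_left]
    by_cases ha : ∃ i ∈ S, Nat.testBit i r = true
    · by_cases hb : ∃ i ∈ S, Nat.testBit i r = false
      · have hd : ∃ i ∈ S, ∃ j ∈ S, Nat.testBit i r ≠ Nat.testBit j r := by
          obtain ⟨i, hi, hit⟩ := ha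
          obtain ⟨j, hj, hjf⟩ := hb
          exact ⟨i, hi, j, hj, by simp [hit, hjf]⟩
        simp [hA, hB, ha, hb, hd]
      · have hd : ¬ ∃ i ∈ S, ∃ j ∈ S, Nat.testBit i r ≠ Nat.testBit j r := by
          rintro ⟨i, hi, j, hj, hne⟩
          push_neg at hb
          have := hb i hi
          have := hb j hj
          simp_all
        simp [hA, hB, ha, hb, hd]
    · by_cases hb : ∃ i ∈ S, Nat.testBit i r = false
      · have hd : ¬ ∃ i ∈ S, ∃ j ∈ S, Nat.testBit i r ≠ Nat.testBit j r := by
          rintro ⟨i, hi, j, hj, hne⟩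
          push_neg at ha
          have := ha i hi
          have := ha j hj
          simp_all
        simp [hA, hB, ha, hb, hd]
      · exfalso
        obtain ⟨i, hi⟩ := hS
        cases h : Nat.testBit i r
        · exact hb ⟨i, hi, h⟩
        · exact ha ⟨i, hi, h⟩
  unfold saffronPosCount
  rw [Finset.card_filter, Finset.card_filter, two_mul, Finset.sum_range_add,
    ← Finset.sum_add_distrib, Finset.sum_congr rfl key, Finset.sum_add_distrib,
    Finset.sum_const, Finset.card_range, smul_eq_mul, mul_one]
end

section
/- If the defective set S ⊆ {0,1,…,2^k−1} has cardinality at least 2, then the SAFFRON test scheme produces at least k+1 positive tests (strictly more than k). -/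
theorem saffron_posCount_gt_k_of_two_le_card
    (k : ℕ) (hk : 1 ≤ k) (S : Finset ℕ) (hsub : S ⊆ Finset.range (2 ^ k))
    (hcard : 2 ≤ S.card) :
    k + 1 ≤ saffronPosCount k S := by
  obtain ⟨x, hx, y, hy, hxy⟩ := Finset.one_lt_card.mp hcard
  have hdiff : ∃ r, Nat.testBit x r ≠ Nat.testBit y r := by
    by_contra h
    push_neg at h
    exact hxy (Nat.eq_of_testBit_eq h)
  obtain ⟨r, hr⟩ := hdiff
  have hxlt : x < 2 ^ k := Finset.mem_range.mp (hsub hx)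
  have hylt : y < 2 ^ k := Finset.mem_range.mp (hsub hy)
  have hrk : r < k := by
    by_contra h
    push_neg at h
    have hx0 : Nat.testBit x r = false :=
      Nat.testBit_eq_false_of_lt (lt_of_lt_of_le hxlt (Nat.pow_le_pow_right (by norm_num) h))
    have hy0 : Nat.testBit y r = false :=
      Nat.testBit_eq_false_of_lt (lt_of_lt_of_le hylt (Nat.pow_le_pow_right (by norm_num) h))
    exact hr (hx0.trans hy0.symm)
  have hposr : saffronPositive k S r := by
    unfold saffronPositive
    rw [if_pos hrk]
    cases hbx : Nat.testBit x r with
    | true => exact ⟨x, hx, hbx⟩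
    | false =>
      cases hby : Nat.testBit y r with
      | true => exact ⟨y, hy, hby⟩
      | false => exact absurd (hbx.trans hby.symm) hr
  set g : ℕ → ℕ := fun j => if saffronPositive k S j then j else k + j with hg
  set A : Finset ℕ := (Finset.range (2 * k)).filter (fun j => saffronPositive k S j) with hA
  have hgmem : ∀ j ∈ Finset.range k, g j ∈ A := by
    intro j hj
    rw [Finset.mem_range] at hj
    by_cases hp : saffronPositive k S j
    · simp only [hg, if_pos hp]
      exact Finset.mem_filter.mpr ⟨Finset.mem_range.mpr (by omega), hp⟩
    · have hpos : saffronPositive k S (k + j) := by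
        unfold saffronPositive
        rw [if_neg (by omega)]
        have hkj : k + j - k = j := by omega
        rw [hkj]
        refine ⟨x, hx, ?_⟩
        by_contra hb
        have hb' : Nat.testBit x j = true := by simpa using hb
        exact hp (by unfold saffronPositive; rw [if_pos hj]; exact ⟨x, hx, hb'⟩)
      simp only [hg, if_neg hp]
      exact Finset.mem_filter.mpr ⟨Finset.mem_range.mpr (by omega), hpos⟩
  have hinj : Set.InjOn g (Finset.range k) := by
    intro a ha b hb hab
    simp only [Finset.coe_range, Set.mem_Iio] at ha hb
    simp only [hg] at hab
    split_ifs at hab <;> omega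
  have himcard : ((Finset.range k).image g).card = k := by
    rw [Finset.card_image_of_injOn hinj, Finset.card_range]
  have hgr : g r = r := by simp [hg, hposr]
  have hkr_not : k + r ∉ (Finset.range k).image g := by
    intro hmem
    obtain ⟨j, hj, hgj⟩ := Finset.mem_image.mp hmem
    rw [Finset.mem_range] at hj
    by_cases hp : saffronPositive k S j
    · simp only [hg, if_pos hp] at hgj; omega
    · simp only [hg, if_neg hp] at hgj
      have : j = r := by omega
      subst this
      exact hp hposr
  have hposkr : saffronPositive k S (k + r) := by
    unfold saffronPositive
    rw [if_neg (by omega)]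
    have hkj : k + r - k = r := by omega
    rw [hkj]
    cases hbx : Nat.testBit x r with
    | false => exact ⟨x, hx, hbx⟩
    | true =>
      cases hby : Nat.testBit y r with
      | false => exact ⟨y, hy, hby⟩
      | true => exact absurd (hbx.trans hby.symm) hr
  have hsubA : insert (k + r) ((Finset.range k).image g) ⊆ A := by
    intro j hj
    rcases Finset.mem_insert.mp hj with h | h
    · subst h
      exact Finset.mem_filter.mpr ⟨Finset.mem_range.mpr (by omega), hposkr⟩
    · obtain ⟨a, ha, hga⟩ := Finset.mem_image.mp h
      exact hga ▸ hgmem a ha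
  calc k + 1 = (insert (k + r) ((Finset.range k).image g)).card := by
        rw [Finset.card_insert_of_notMem hkr_not, himcard]
    _ ≤ A.card := Finset.card_le_card hsubA
end

section
/- Let N denote the number of positive tests produced by the SAFFRON test scheme on a defective set S ⊆ {0,1,…,2^k−1}. Then N = 0 if and only if S = ∅; N = k if and only if |S| = 1; and N ≥ k+1 if and only if |S| ≥ 2. In particular, the number of positive tests determines whether the tested group contains zero, exactly one, or more than one defective item. -/
namespace SaffronAux

variable {k : ℕ} {S : Finset ℕ}

lemma pos_lt {r : ℕ} (hr : r < k) :
    saffronPositive k S r ↔ ∃ i ∈ S, Nat.testBit i r = true := by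
  simp [saffronPositive, hr]

lemma pos_add (r : ℕ) :
    saffronPositive k S (k + r) ↔ ∃ i ∈ S, Nat.testBit i r = false := by
  have h : ¬ (k + r < k) := by omega
  simp [saffronPositive, h]

/-- Contribution of the pair of tests `(r, k + r)`. -/
def term (k : ℕ) (S : Finset ℕ) (r : ℕ) : ℕ :=
  (if saffronPositive k S r then 1 else 0) +
  (if saffronPositive k S (k + r) then 1 else 0)

lemma count_eq : saffronPosCount k S = ∑ r ∈ Finset.range k, term k S r := by
  unfold saffronPosCount term
  rw [Finset.card_filter, two_mul, Finset.sum_range_add, Finset.sum_add_distrib]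

lemma one_le_term (hS : S.Nonempty) {r : ℕ} (hr : r < k) : 1 ≤ term k S r := by
  obtain ⟨i, hi⟩ := hS
  unfold term
  by_cases h1 : saffronPositive k S r
  · simp [h1]
  · rcases Bool.eq_false_or_eq_true (Nat.testBit i r) with h | h
    · exact absurd ((pos_lt hr).2 ⟨i, hi, h⟩) h1
    · have h2 : saffronPositive k S (k + r) := (pos_add r).2 ⟨i, hi, h⟩
      simp [h2]

lemma term_le_one {r : ℕ}
    (h : ¬ (saffronPositive k S r ∧ saffronPositive k S (k + r))) :
    term k S r ≤ 1 := by
  by_cases h1 : saffronPositive k S r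
  · by_cases h2 : saffronPositive k S (k + r)
    · exact absurd ⟨h1, h2⟩ h
    · simp [term, h1, h2]
  · by_cases h2 : saffronPositive k S (k + r) <;> simp [term, h1, h2]

lemma k_le_count (hS : S.Nonempty) : k ≤ saffronPosCount k S := by
  rw [count_eq]
  calc k = ∑ _r ∈ Finset.range k, 1 := by simp
    _ ≤ _ := Finset.sum_le_sum fun r hr => one_le_term hS (Finset.mem_range.1 hr)

lemma succ_le_count {r : ℕ} (hr : r < k) (h1 : saffronPositive k S r)
    (h2 : saffronPositive k S (k + r)) : k + 1 ≤ saffronPosCount k S := by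
  have hS : S.Nonempty := by
    rcases (pos_lt hr).1 h1 with ⟨i, hi, _⟩; exact ⟨i, hi⟩
  rw [count_eq]
  have hmem : r ∈ Finset.range k := Finset.mem_range.2 hr
  rw [← Finset.add_sum_erase _ _ hmem]
  have ht : term k S r = 2 := by simp [term, h1, h2]
  have hrest : (k - 1) ≤ ∑ x ∈ (Finset.range k).erase r, term k S x := by
    calc k - 1 = ∑ _x ∈ (Finset.range k).erase r, 1 := by
          simp [Finset.card_erase_of_mem hmem]
      _ ≤ _ := Finset.sum_le_sum fun x hx =>
          one_le_term hS (Finset.mem_range.1 (Finset.mem_of_mem_erase hx))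
  omega

lemma count_le_k
    (h : ∀ r < k, ¬ (saffronPositive k S r ∧ saffronPositive k S (k + r))) :
    saffronPosCount k S ≤ k := by
  rw [count_eq]
  calc ∑ r ∈ Finset.range k, term k S r ≤ ∑ _r ∈ Finset.range k, 1 :=
      Finset.sum_le_sum fun r hr => term_le_one (h r (Finset.mem_range.1 hr))
    _ = k := by simp

lemma count_empty : saffronPosCount k (∅ : Finset ℕ) = 0 := by
  unfold saffronPosCount
  simp [saffronPositive]

lemma exists_diff_bit {i j : ℕ} (hi : i < 2 ^ k) (hj : j < 2 ^ k) (hne : i ≠ j) :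
    ∃ r < k, Nat.testBit i r ≠ Nat.testBit j r := by
  by_contra h
  push_neg at h
  apply hne
  apply Nat.eq_of_testBit_eq
  intro r
  by_cases hr : r < k
  · exact h r hr
  · have h2 : (2:ℕ) ^ k ≤ 2 ^ r := Nat.pow_le_pow_right (by norm_num) (le_of_not_gt hr)
    rw [Nat.testBit_lt_two_pow (lt_of_lt_of_le hi h2),
        Nat.testBit_lt_two_pow (lt_of_lt_of_le hj h2)]

lemma both_of_diff {i j : ℕ} (hi : i ∈ S) (hj : j ∈ S) {r : ℕ} (hr : r < k)
    (hne : Nat.testBit i r ≠ Nat.testBit j r) :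
    saffronPositive k S r ∧ saffronPositive k S (k + r) := by
  rcases Bool.eq_false_or_eq_true (Nat.testBit i r) with h | h
  · have hj' : Nat.testBit j r = false := by
      cases hb : Nat.testBit j r
      · rfl
      · exact absurd (h.trans hb.symm) hne
    exact ⟨(pos_lt hr).2 ⟨i, hi, h⟩, (pos_add r).2 ⟨j, hj, hj'⟩⟩
  · have hj' : Nat.testBit j r = true := by
      cases hb : Nat.testBit j r
      · exact absurd (h.trans hb.symm) hne
      · rfl
    exact ⟨(pos_lt hr).2 ⟨j, hj, hj'⟩, (pos_add r).2 ⟨i, hi, h⟩⟩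

end SaffronAux

open SaffronAux in
theorem saffron_posCount_trichotomy
    (k : ℕ) (hk : 1 ≤ k) (S : Finset ℕ) (hsub : S ⊆ Finset.range (2 ^ k)) :
    (saffronPosCount k S = 0 ↔ S = ∅) ∧
    (saffronPosCount k S = k ↔ S.card = 1) ∧
    (k + 1 ≤ saffronPosCount k S ↔ 2 ≤ S.card) := by
  have f0 : S.card = 0 → saffronPosCount k S = 0 := by
    intro h
    rw [Finset.card_eq_zero.1 h]
    exact count_empty
  have f1 : S.card = 1 → saffronPosCount k S = k := by
    intro h1
    obtain ⟨i, hSi⟩ := Finset.card_eq_one.1 h1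
    subst hSi
    refine le_antisymm (count_le_k ?_) (k_le_count ⟨i, Finset.mem_singleton_self i⟩)
    rintro r hr ⟨p1, p2⟩
    obtain ⟨a, ha, hta⟩ := (pos_lt hr).1 p1
    obtain ⟨b, hb, htb⟩ := (pos_add r).1 p2
    rw [Finset.mem_singleton] at ha hb
    subst ha; subst hb
    rw [hta] at htb
    exact Bool.noConfusion htb
  have f2 : 2 ≤ S.card → k + 1 ≤ saffronPosCount k S := by
    intro h2
    obtain ⟨i, hi, j, hj, hne⟩ := Finset.one_lt_card.1 h2
    obtain ⟨r, hr, hdiff⟩ := exists_diff_bit (Finset.mem_range.1 (hsub hi))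
      (Finset.mem_range.1 (hsub hj)) hne
    obtain ⟨p1, p2⟩ := both_of_diff hi hj hr hdiff
    exact succ_le_count hr p1 p2
  rw [← Finset.card_eq_zero]
  omega
end
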